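/- The Ehrhart h*-vector of Q_n is (1,1,...,1,0,...,0) with exactly n ones: h*_i = 1 for 0 ≤ i ≤ n−1 and h*_i = 0 for n ≤ i ≤ 2n−2. Equivalently, the Ehrhart series of Q_n is (1 + t + ... + t^{n−1})/(1−t)^{2n−1}. -/

import Mathlib

/-!
A point of `m • Q_n` has coordinates `x_{b j} = α_j + β_{j-b}` with `α, β ≥ 0` and
`∑ α + ∑ β = m`. Normalising `min β = 0` makes `(α, β)` unique, and then `x` is a lattice point
exactly when `α` and `β` are integral. So the lattice points of `m • Q_n` are the points
`(α, β) ∈ ℕ^{2n}` of total mass `m` with some `β_k = 0`; the others (all `β_k ≥ 1`) correspond,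
after subtracting `1` from every `β_k`, to the points of mass `m - n`. Counting by stars and bars,
the Ehrhart series is `(1 - t^n)/(1 - t)^{2n} = (1 + ⋯ + t^{n-1})/(1 - t)^{2n-1}`.
-/

open Matrix Finset Pointwise

variable (n : ℕ) [NeZero n]

/-- Permutation matrix of `σ`: entries `δ_{i, σ(j)}`. -/
def permMat (σ : Equiv.Perm (ZMod n)) : Matrix (ZMod n) (ZMod n) ℝ :=
  Matrix.of fun i j => if i = σ j then 1 else 0

/-- Rotation `x ↦ x + 1` of the regular n-gon with vertex set `ZMod n`. -/
def rot : Equiv.Perm (ZMod n) := Equiv.addRight 1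

/-- Reflection `x ↦ -x` of the regular n-gon. -/
def rfl' : Equiv.Perm (ZMod n) := Equiv.neg (ZMod n)

/-- The dihedral group `D_n ≤ S_n`, symmetries of the regular n-gon. -/
def dihedral : Subgroup (Equiv.Perm (ZMod n)) := Subgroup.closure {rot n, rfl' n}

/-- Adjacency matrix of the n-cycle `C_n`. -/
def cycAdj : Matrix (ZMod n) (ZMod n) ℝ :=
  Matrix.of fun i j => if j = i + 1 ∨ j = i - 1 then 1 else 0

/-- The permutation polytope `DP_n = conv{M_σ : σ ∈ D_n} ⊆ ℝ^{n×n}`. -/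
def DP : Set (Matrix (ZMod n) (ZMod n) ℝ) :=
  convexHull ℝ {M | ∃ σ ∈ dihedral n, M = permMat n σ}

/-- The cyclic shift matrix `R`. -/
def Rmat : Matrix (ZMod n) (ZMod n) ℝ := Matrix.of fun i j => if j = i + 1 then 1 else 0

/-- The `2n` rows of `W = [[I,...,I],[I,R,...,R^{n-1}]]`, viewed as vectors in
`ℝ^{n²} = Matrix (ZMod n) (ZMod n) ℝ`; the first matrix coordinate is the block index. -/
def Wrow : Bool × ZMod n → Matrix (ZMod n) (ZMod n) ℝ
  | (false, k) => Matrix.of fun _ j => if j = k then 1 else 0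
  | (true, k) => Matrix.of fun b j => (Rmat n ^ b.val) k j

/-- The polytope `Q_n ⊆ ℝ^{n²}`. -/
def Qpoly : Set (Matrix (ZMod n) (ZMod n) ℝ) := convexHull ℝ (Set.range (Wrow n))

/-- A point of `ℝ^{n²}` is a lattice point if all its coordinates are integers. -/
def IsInt (x : Matrix (ZMod n) (ZMod n) ℝ) : Prop := ∀ b j, ∃ z : ℤ, x b j = (z : ℝ)

section Counting

variable {ι : Type*} [Fintype ι]

theorem ncard_setOf_sum_eq (m : ℕ) :
    {f : ι → ℕ | ∑ i, f i = m}.ncard = (Fintype.card ι + m - 1).choose m := by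
  classical
  rw [← Nat.card_coe_set_eq]
  exact (Nat.card_congr (Sym.equivNatSumOfFintype ι m).symm).trans
    ((Nat.card_eq_fintype_card).trans (Sym.card_sym_eq_choose m))

theorem finite_setOf_sum_eq (m : ℕ) : {f : ι → ℕ | ∑ i, f i = m}.Finite := by
  classical
  exact Set.finite_coe_iff.mp (Finite.of_equiv _ (Sym.equivNatSumOfFintype ι m))

theorem sum_add_ite_mem [DecidableEq ι] (s : Finset ι) (f : ι → ℕ) :
    ∑ i, (f i + if i ∈ s then 1 else 0) = ∑ i, f i + #s := by
  simp [Finset.sum_add_distrib]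

theorem card_le_sum_of_ne_zero {s : Finset ι} {f : ι → ℕ} (hf : ∀ i ∈ s, f i ≠ 0) :
    #s ≤ ∑ i, f i :=
  calc #s = ∑ _i ∈ s, 1 := Finset.card_eq_sum_ones s
    _ ≤ ∑ i ∈ s, f i := Finset.sum_le_sum fun i hi => Nat.one_le_iff_ne_zero.2 (hf i hi)
    _ ≤ ∑ i, f i := Finset.sum_le_univ_sum_of_nonneg fun _ => Nat.zero_le _

theorem ncard_setOf_sum_eq_add_card_ne_zero (s : Finset ι) (m : ℕ) :
    {f : ι → ℕ | ∑ i, f i = m + #s ∧ ∀ i ∈ s, f i ≠ 0}.ncard =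
      {f : ι → ℕ | ∑ i, f i = m}.ncard := by
  classical
  symm
  refine Set.ncard_congr (fun f _ i => f i + if i ∈ s then 1 else 0) ?_ ?_ ?_
  · intro f hf
    exact ⟨by rw [sum_add_ite_mem, hf], fun i hi => by simp [hi]⟩
  · intro f g _ _ hfg
    funext i
    simpa using congrFun hfg i
  · rintro g ⟨hg, hg0⟩
    have hsplit : g = fun i => (g i - if i ∈ s then 1 else 0) + if i ∈ s then 1 else 0 := by
      funext i
      split_ifs with hi
      · have := hg0 i hi; omega
      · rfl
    refine ⟨fun i => g i - if i ∈ s then 1 else 0, ?_, hsplit.symm⟩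
    have := sum_add_ite_mem s fun i => g i - if i ∈ s then 1 else 0
    rw [← hsplit, hg] at this
    exact (Nat.add_right_cancel this).symm

theorem setOf_sum_eq_ne_zero_eq_empty {s : Finset ι} {m : ℕ} (hm : m < #s) :
    {f : ι → ℕ | ∑ i, f i = m ∧ ∀ i ∈ s, f i ≠ 0} = ∅ :=
  Set.eq_empty_of_forall_notMem fun _ ⟨hf, hf0⟩ => (card_le_sum_of_ne_zero hf0).not_gt (hf ▸ hm)

theorem ncard_setOf_sum_eq_exists_zero_add (s : Finset ι) (m : ℕ) :
    {f : ι → ℕ | ∑ i, f i = m ∧ ∃ i ∈ s, f i = 0}.ncard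
      + (if #s ≤ m then {f : ι → ℕ | ∑ i, f i = m - #s}.ncard else 0)
      = {f : ι → ℕ | ∑ i, f i = m}.ncard := by
  have hsplit := Set.ncard_inter_add_ncard_sdiff_eq_ncard {f : ι → ℕ | ∑ i, f i = m}
    {f | ∃ i ∈ s, f i = 0} (finite_setOf_sum_eq m)
  have hdiff : {f : ι → ℕ | ∑ i, f i = m} \ {f | ∃ i ∈ s, f i = 0} =
      {f : ι → ℕ | ∑ i, f i = m ∧ ∀ i ∈ s, f i ≠ 0} := by
    ext f; simp
  have hpos : (if #s ≤ m then {f : ι → ℕ | ∑ i, f i = m - #s}.ncard else 0) =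
      {f : ι → ℕ | ∑ i, f i = m ∧ ∀ i ∈ s, f i ≠ 0}.ncard := by
    split_ifs with hm
    · rw [← ncard_setOf_sum_eq_add_card_ne_zero s, Nat.sub_add_cancel hm]
    · rw [setOf_sum_eq_ne_zero_eq_empty (not_le.1 hm), Set.ncard_empty]
  rw [hpos, ← hdiff, ← hsplit]
  rfl

end Counting

theorem PowerSeries.mk_ncard_setOf_sum_eq_mul_one_sub_pow (R : Type*) [CommRing R]
    (ι : Type*) [Fintype ι] [Nonempty ι] :
    (mk fun m => ({f : ι → ℕ | ∑ i, f i = m}.ncard : R)) * (1 - X) ^ Fintype.card ι = 1 := by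
  obtain ⟨d, hd⟩ : ∃ d, Fintype.card ι = d + 1 := Nat.exists_eq_succ_of_ne_zero Fintype.card_ne_zero
  convert mk_add_choose_mul_one_sub_pow_eq_one R d using 3
  funext m
  rw [ncard_setOf_sum_eq, hd, show d + 1 + m - 1 = d + m by omega, Nat.choose_symm_add]

theorem PowerSeries.mk_eq_one_sub_X_pow_mul {R : Type*} [CommRing R] {a c : ℕ → R} (k : ℕ)
    (h : ∀ m, a m + (if k ≤ m then c (m - k) else 0) = c m) :
    mk a = (1 - X ^ k) * mk c := by
  ext m
  rw [sub_mul, one_mul, map_sub, coeff_X_pow_mul', coeff_mk, coeff_mk, coeff_mk, ← h m]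
  split_ifs <;> simp

section ConvexHull

variable {R E ι : Type*} [Field R] [LinearOrder R] [IsStrictOrderedRing R] [AddCommGroup E]
  [Module R E] [Fintype ι]

theorem convexHull_range_eq_image_stdSimplex [DecidableEq ι] (v : ι → E) :
    convexHull R (Set.range v) = Fintype.linearCombination R v '' stdSimplex R ι := by
  rw [← convexHull_basis_eq_stdSimplex, LinearMap.image_convexHull, ← Set.range_comp]
  congr 2
  funext i
  simp [Fintype.linearCombination_apply, ite_smul]

theorem smul_stdSimplex [Nonempty ι] {c : R} (hc : 0 ≤ c) :
    c • stdSimplex R ι = {w | (∀ i, 0 ≤ w i) ∧ ∑ i, w i = c} := by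
  classical
  rcases hc.eq_or_lt with rfl | hc
  · rw [Set.zero_smul_set ⟨_, ite_eq_mem_stdSimplex R (Classical.arbitrary ι)⟩]
    ext w
    simp only [Set.mem_zero, Set.mem_ofPred_eq]
    constructor
    · rintro rfl
      simp
    · rintro ⟨hw, hsum⟩
      funext i
      exact (Finset.sum_eq_zero_iff_of_nonneg fun i _ => hw i).1 hsum i (Finset.mem_univ i)
  · ext w
    rw [Set.mem_smul_set_iff_inv_smul_mem₀ hc.ne']
    simp only [stdSimplex, Set.mem_ofPred_eq, Pi.smul_apply, smul_eq_mul, ← Finset.mul_sum,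
      inv_mul_eq_one₀ hc.ne', eq_comm (a := c)]
    simp [hc]

theorem mem_smul_convexHull_range_iff [Nonempty ι] (v : ι → E) {c : R} (hc : 0 ≤ c) (x : E) :
    x ∈ c • convexHull R (Set.range v) ↔
      ∃ w : ι → R, (∀ i, 0 ≤ w i) ∧ ∑ i, w i = c ∧ ∑ i, w i • v i = x := by
  classical
  rw [convexHull_range_eq_image_stdSimplex, ← image_smul_set, smul_stdSimplex hc]
  simp [Fintype.linearCombination_apply, and_assoc]

end ConvexHull

section Wcomb

variable {G : Type*} [AddCommGroup G]

-- The point `∑ p, w p • Wrow n p` (see `sum_smul_Wrow`), with `α = w (false, ·)`, `β = w (true, ·)`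
def Wcomb {R : Type*} [Add R] (w : Bool × G → R) : Matrix G G R :=
  Matrix.of fun b j => w (false, j) + w (true, j - b)

theorem Wcomb_apply_sub_right {R : Type*} [Add R] (w : Bool × G → R) (j k : G) :
    Wcomb w (j - k) j = w (false, j) + w (true, k) := by
  simp [Wcomb]

theorem Wcomb_natCast {R : Type*} [AddMonoidWithOne R] (v : Bool × G → ℕ) :
    Wcomb (fun p => (v p : R)) = (Wcomb v).map Nat.cast := by
  ext b j
  simp [Wcomb]

-- Moving the constant `min β` from `β` to `α` does not change `x_{b j} = α_j + β_{j-b}`.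
theorem exists_Wcomb_eq_with_zero [Fintype G] [Nonempty G] {R : Type*} [AddCommGroup R]
    [LinearOrder R] [IsOrderedAddMonoid R] (w : Bool × G → R) (hw : ∀ p, 0 ≤ w p) :
    ∃ w' : Bool × G → R, (∀ p, 0 ≤ w' p) ∧ (∃ k, w' (true, k) = 0) ∧
      ∑ p, w' p = ∑ p, w p ∧ Wcomb w' = Wcomb w := by
  obtain ⟨k₀, -, hk₀⟩ :=
    Finset.exists_min_image Finset.univ (fun k => w (true, k)) Finset.univ_nonempty
  set c := w (true, k₀)
  refine ⟨fun p => if p.1 then w p - c else w p + c, ?_, ⟨k₀, sub_self c⟩, ?_, ?_⟩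
  · rintro ⟨_ | _, k⟩
    · exact add_nonneg (hw _) (hw _)
    · exact sub_nonneg.2 (hk₀ k (Finset.mem_univ k))
  · simp [Fintype.sum_prod_type, Finset.sum_add_distrib, Finset.sum_sub_distrib]
  · ext b j
    simp only [Wcomb, Matrix.of_apply, if_true, Bool.false_eq_true, if_false]
    abel

theorem exists_int_eq_of_Wcomb_int {w : Bool × G → ℝ} (hint : ∀ b j, ∃ z : ℤ, Wcomb w b j = z)
    {k₀ : G} (hk₀ : w (true, k₀) = 0) (p : Bool × G) : ∃ z : ℤ, w p = z := by
  obtain ⟨_ | _, k⟩ := p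
  · obtain ⟨z, hz⟩ := hint (k - k₀) k
    exact ⟨z, by rwa [Wcomb_apply_sub_right, hk₀, add_zero] at hz⟩
  · obtain ⟨z₁, hz₁⟩ := hint (0 - k) 0
    obtain ⟨z₂, hz₂⟩ := hint (0 - k₀) 0
    rw [Wcomb_apply_sub_right] at hz₁ hz₂
    exact ⟨z₁ - z₂, by push_cast; linarith⟩

theorem eq_of_Wcomb_eq {v v' : Bool × G → ℕ} (hv : ∃ k, v (true, k) = 0)
    (hv' : ∃ k, v' (true, k) = 0) (h : Wcomb v = Wcomb v') : v = v' := by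
  have hsum (j k : G) : v (false, j) + v (true, k) = v' (false, j) + v' (true, k) := by
    simpa only [Wcomb_apply_sub_right] using congrFun (congrFun h (j - k)) j
  obtain ⟨k₀, hk₀⟩ := hv
  obtain ⟨k₁, hk₁⟩ := hv'
  have hfalse (j : G) : v (false, j) = v' (false, j) := by
    have := hsum j k₀
    have := hsum j k₁
    omega
  funext p
  obtain ⟨_ | _, k⟩ := p
  · exact hfalse k
  · have := hsum 0 k
    have := hfalse 0
    omega

end Wcomb

theorem Rmat_pow_apply (t : ℕ) (k j : ZMod n) :
    (Rmat n ^ t) k j = if j = k + t then 1 else 0 := by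
  induction t generalizing j with
  | zero => simp [Matrix.one_apply, eq_comm]
  | succ t ih =>
    rw [pow_succ, Matrix.mul_apply]
    simp only [ih]
    simp only [Rmat, Matrix.of_apply, ite_mul, one_mul, zero_mul]
    rw [Finset.sum_eq_single (k + t) (fun l _ hl => by simp [hl]) (by simp)]
    simp [add_assoc]

theorem Wrow_true_apply (k b j : ZMod n) :
    Wrow n (true, k) b j = if j - b = k then 1 else 0 := by
  simp only [Wrow, Matrix.of_apply, Rmat_pow_apply, ZMod.natCast_val, ZMod.cast_id', id,
    sub_eq_iff_eq_add]

theorem sum_smul_Wrow (w : Bool × ZMod n → ℝ) : ∑ p, w p • Wrow n p = Wcomb w := by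
  ext b j
  simp only [Matrix.sum_apply, Fintype.sum_prod_type, Fintype.sum_bool, Matrix.smul_apply,
    Wrow_true_apply]
  simp [Wrow, Wcomb, add_comm]

theorem mem_smul_Qpoly_iff {c : ℝ} (hc : 0 ≤ c) (x : Matrix (ZMod n) (ZMod n) ℝ) :
    x ∈ c • Qpoly n ↔ ∃ w, (∀ p, 0 ≤ w p) ∧ ∑ p, w p = c ∧ Wcomb w = x := by
  simp only [Qpoly, mem_smul_convexHull_range_iff _ hc, sum_smul_Wrow]

theorem latticePoints_smul_Qpoly (m : ℕ) :
    {x | x ∈ (m : ℝ) • Qpoly n ∧ IsInt n x} =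
      (fun v : Bool × ZMod n → ℕ => Wcomb fun p => (v p : ℝ)) ''
        {v | ∑ p, v p = m ∧ ∃ k, v (true, k) = 0} := by
  ext x
  simp only [Set.mem_ofPred_eq, mem_smul_Qpoly_iff n (Nat.cast_nonneg m), Set.mem_image]
  constructor
  · rintro ⟨⟨w, hw, hsum, rfl⟩, hint⟩
    obtain ⟨w', hw', ⟨k₀, hk₀⟩, hsum', heq⟩ := exists_Wcomb_eq_with_zero w hw
    rw [← heq] at hint ⊢
    have hnat (p : Bool × ZMod n) : ∃ a : ℕ, (a : ℝ) = w' p := by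
      obtain ⟨z, hz⟩ := exists_int_eq_of_Wcomb_int hint hk₀ p
      lift z to ℕ using (by exact_mod_cast hz ▸ hw' p)
      exact ⟨z, hz.symm⟩
    choose v hv using hnat
    refine ⟨v, ⟨?_, k₀, ?_⟩, by simp only [hv]⟩
    · exact_mod_cast (by simp only [Nat.cast_sum, hv, hsum', hsum] : ((∑ p, v p : ℕ) : ℝ) = m)
    · exact_mod_cast (hv (true, k₀)).trans hk₀
  · rintro ⟨v, ⟨hsum, -⟩, rfl⟩
    refine ⟨⟨fun p => v p, fun p => Nat.cast_nonneg _, ?_, rfl⟩,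
      fun b j => ⟨v (false, j) + v (true, j - b), by simp [Wcomb]⟩⟩
    show ∑ p, (v p : ℝ) = m
    exact_mod_cast hsum

theorem ncard_latticePoints_smul_Qpoly_add (m : ℕ) :
    {x | x ∈ (m : ℝ) • Qpoly n ∧ IsInt n x}.ncard
      + (if n ≤ m then {v : Bool × ZMod n → ℕ | ∑ p, v p = m - n}.ncard else 0)
      = {v : Bool × ZMod n → ℕ | ∑ p, v p = m}.ncard := by
  have hinj : Set.InjOn (fun v : Bool × ZMod n → ℕ => Wcomb fun p => (v p : ℝ))
      {v | ∑ p, v p = m ∧ ∃ k, v (true, k) = 0} := by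
    intro v hv v' hv' h
    simp only [Wcomb_natCast] at h
    exact eq_of_Wcomb_eq hv.2 hv'.2 (Matrix.map_injective Nat.cast_injective h)
  have hcard : #({true} ×ˢ univ : Finset (Bool × ZMod n)) = n := by simp
  have hsplit := ncard_setOf_sum_eq_exists_zero_add ({true} ×ˢ univ : Finset (Bool × ZMod n)) m
  rw [hcard] at hsplit
  rw [latticePoints_smul_Qpoly, hinj.ncard_image]
  convert hsplit using 4
  simp

theorem Q_hstar_vector_general (n : ℕ) [NeZero n] :
    (PowerSeries.mk fun m : ℕ =>
        (({x | x ∈ (m : ℝ) • Qpoly n ∧ IsInt n x}.ncard : ℝ)))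
      * (1 - PowerSeries.X) ^ (2 * n - 1)
    = ∑ i ∈ Finset.range n, PowerSeries.X ^ i := by
  set c : ℕ → ℝ := fun m => {v : Bool × ZMod n → ℕ | ∑ p, v p = m}.ncard
  have hcount (m : ℕ) : ({x | x ∈ (m : ℝ) • Qpoly n ∧ IsInt n x}.ncard : ℝ)
      + (if n ≤ m then c (m - n) else 0) = c m := by
    have := congrArg (Nat.cast : ℕ → ℝ) (ncard_latticePoints_smul_Qpoly_add n m)
    rw [Nat.cast_add, Nat.cast_ite, Nat.cast_zero] at this
    exact this
  obtain ⟨d, hd⟩ : ∃ d, 2 * n = d + 1 := ⟨2 * n - 1, by have := NeZero.pos n; omega⟩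
  have hsimplex : PowerSeries.mk c * (1 - PowerSeries.X) ^ (d + 1) = 1 := by
    simpa [two_mul, hd] using
      PowerSeries.mk_ncard_setOf_sum_eq_mul_one_sub_pow ℝ (Bool × ZMod n)
  rw [hd, Nat.add_sub_cancel, PowerSeries.mk_eq_one_sub_X_pow_mul n hcount, ← geom_sum_mul_neg]
  linear_combination (∑ i ∈ Finset.range n, PowerSeries.X ^ i) * hsimplex

/-- the Ehrhart series of `Q_n` is `(1 + t + ⋯ + t^{n-1})/(1-t)^{2n-1}`,
i.e. the `h*`-vector of `Q_n` is `(1,1,…,1)` with exactly `n` ones. -/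
theorem Q_hstar_vector (n : ℕ) [NeZero n] (hn : 3 ≤ n) :
    (PowerSeries.mk fun m : ℕ =>
        (({x | x ∈ (m : ℝ) • Qpoly n ∧ IsInt n x}.ncard : ℝ)))
      * (1 - PowerSeries.X) ^ (2 * n - 1)
    = ∑ i ∈ Finset.range n, PowerSeries.X ^ i :=
  Q_hstar_vector_general n
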